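/- arXiv:2007.08816 — 4 statements merged into one kernel-verified Lean document; each statement's English description precedes it below -/
import Mathlib

section
/- Let s ∈ ℝ, C₁ > 0, and let (v_n)_{n ≥ 1} be a sequence of non-negative reals satisfying v_n ≤ C₁ · Σ_{a,b ≥ 1, a+b=n} v_a v_b + C₁ e^{s n} for all n ≥ 1. Then (v_n) grows at most exponentially: there exists R > 0 such that v_n ≤ R^n for all n ≥ 1. -/
/-!
Compare `v` with the Catalan majorant `u n = B K^n c_{n-1}`. Since the Catalan numbers satisfy
`c_{n-1} = Σ_{a+b=n} c_{a-1} c_{b-1}`, the quadratic term of the recursion evaluated at `u` is at most `C B u n`,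
which is `u n / 2` for `B = 1/(2C)`; taking `K = e^s max(1, 4C²)` makes the forcing term `C e^{sn}`
at most the other half. Strong induction then gives `v ≤ u`, and `c_{n-1} ≤ 4^n` makes `u` exponential.
-/

open Finset

theorem catalan_pos (n : ℕ) : 0 < catalan n :=
  Nat.pos_of_mul_pos_left ((succ_mul_catalan_eq_centralBinom n).symm ▸ n.centralBinom_pos)

theorem catalan_le_four_pow (n : ℕ) : catalan n ≤ 4 ^ n :=
  calc catalan n ≤ (n + 1) * catalan n := Nat.le_mul_of_pos_left _ n.succ_pos
    _ = n.centralBinom := succ_mul_catalan_eq_centralBinom n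
    _ ≤ 4 ^ n := Nat.centralBinom_le_four_pow n

theorem sum_Ioo_catalan_mul_catalan_le {n : ℕ} (hn : 1 ≤ n) :
    ∑ a ∈ Ioo 0 n, catalan (a - 1) * catalan (n - a - 1) ≤ catalan (n - 1) := by
  obtain rfl | ⟨m, rfl⟩ : n = 1 ∨ ∃ m, n = m + 2 := by
    rcases Nat.lt_or_ge n 2 with h | h
    · exact .inl (by omega)
    · exact .inr ⟨n - 2, by omega⟩
  · simp [show Ioo 0 1 = ∅ from rfl]
  refine le_of_eq ?_
  rw [show Ioo 0 (m + 2) = Ico 1 (m + 2) from rfl, sum_Ico_eq_sum_range,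
    show m + 2 - 1 = m + 1 from rfl, catalan_succ',
    Nat.sum_antidiagonal_eq_sum_range_succ (fun x y => catalan x * catalan y)]
  refine sum_congr rfl fun i hi => ?_
  rw [mem_range] at hi
  congr 2 <;> omega

theorem le_of_convolution_supersolution {v u g : ℕ → ℝ} {C : ℝ} (hC : 0 ≤ C)
    (hv : ∀ n, 0 ≤ v n)
    (hsub : ∀ n ≥ 1, v n ≤ C * ∑ a ∈ Ioo 0 n, v a * v (n - a) + g n)
    (hsuper : ∀ n ≥ 1, C * ∑ a ∈ Ioo 0 n, u a * u (n - a) + g n ≤ u n) :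
    ∀ n ≥ 1, v n ≤ u n := by
  intro n
  induction n using Nat.strong_induction_on with
  | _ n ih =>
    intro hn
    have hconv : ∑ a ∈ Ioo 0 n, v a * v (n - a) ≤ ∑ a ∈ Ioo 0 n, u a * u (n - a) := by
      refine sum_le_sum fun a ha => ?_
      rw [mem_Ioo] at ha
      have hva := ih a ha.2 ha.1
      exact mul_le_mul hva (ih (n - a) (by omega) (by omega)) (hv _) ((hv a).trans hva)
    calc v n ≤ C * ∑ a ∈ Ioo 0 n, v a * v (n - a) + g n := hsub n hn
      _ ≤ C * ∑ a ∈ Ioo 0 n, u a * u (n - a) + g n := by gcongr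
      _ ≤ u n := hsuper n hn

def catalanMajorant (B K : ℝ) (n : ℕ) : ℝ := B * K ^ n * catalan (n - 1)

section catalanMajorant

variable {B K : ℝ}

theorem catalanMajorant_convolution_le (hK : 0 ≤ K) {n : ℕ} (hn : 1 ≤ n) :
    ∑ a ∈ Ioo 0 n, catalanMajorant B K a * catalanMajorant B K (n - a)
      ≤ B * catalanMajorant B K n := by
  have hterm : ∀ a ∈ Ioo 0 n, catalanMajorant B K a * catalanMajorant B K (n - a)
      = B ^ 2 * K ^ n * ((catalan (a - 1) * catalan (n - a - 1) : ℕ) : ℝ) := by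
    intro a ha
    rw [mem_Ioo] at ha
    have hpow : K ^ n = K ^ a * K ^ (n - a) := by rw [← pow_add, Nat.add_sub_cancel' ha.2.le]
    simp only [catalanMajorant, hpow, Nat.cast_mul]
    ring
  rw [sum_congr rfl hterm, ← mul_sum, ← Nat.cast_sum, catalanMajorant]
  calc B ^ 2 * K ^ n * ((∑ a ∈ Ioo 0 n, catalan (a - 1) * catalan (n - a - 1) : ℕ) : ℝ)
      ≤ B ^ 2 * K ^ n * catalan (n - 1) := by
        gcongr
        exact_mod_cast sum_Ioo_catalan_mul_catalan_le hn
    _ = B * (B * K ^ n * catalan (n - 1)) := by ring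

theorem le_catalanMajorant (hB : 0 ≤ B) (hK : 0 ≤ K) (n : ℕ) :
    B * K ^ n ≤ catalanMajorant B K n :=
  le_mul_of_one_le_right (by positivity) (by exact_mod_cast catalan_pos (n - 1))

theorem catalanMajorant_le_pow (hK : 0 ≤ K) {n : ℕ} (hn : 1 ≤ n) :
    catalanMajorant B K n ≤ (4 * K * max 1 B) ^ n := by
  have hcat : (catalan (n - 1) : ℝ) ≤ 4 ^ n := by
    exact_mod_cast (catalan_le_four_pow (n - 1)).trans (Nat.pow_le_pow_right (by norm_num) (by omega))
  have hB' : B ≤ max 1 B ^ n := (le_max_right 1 B).trans (le_self_pow₀ (le_max_left 1 B) (by omega))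
  calc catalanMajorant B K n ≤ max 1 B ^ n * K ^ n * 4 ^ n := by
        unfold catalanMajorant
        gcongr
    _ = (4 * K * max 1 B) ^ n := by ring

theorem catalanMajorant_isSupersolution {C E : ℝ} (hC : 0 < C) (hE : 0 ≤ E) {n : ℕ} (hn : 1 ≤ n) :
    C * ∑ a ∈ Ioo 0 n, catalanMajorant (1 / (2 * C)) (E * max 1 (4 * C ^ 2)) a
        * catalanMajorant (1 / (2 * C)) (E * max 1 (4 * C ^ 2)) (n - a) + C * E ^ n
      ≤ catalanMajorant (1 / (2 * C)) (E * max 1 (4 * C ^ 2)) n := by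
  set M := max 1 (4 * C ^ 2)
  set u := catalanMajorant (1 / (2 * C)) (E * M)
  have hM : 0 ≤ M := zero_le_one.trans (le_max_left _ _)
  have hconv := catalanMajorant_convolution_le (B := 1 / (2 * C)) (mul_nonneg hE hM) hn
  have hforce : 4 * C ^ 2 * E ^ n ≤ (E * M) ^ n := by
    rw [mul_pow, mul_comm]
    gcongr
    exact (le_max_right _ _).trans (le_self_pow₀ (le_max_left _ _) (by omega))
  have hlow := le_catalanMajorant (B := 1 / (2 * C)) (by positivity) (mul_nonneg hE hM) n
  calc C * ∑ a ∈ Ioo 0 n, u a * u (n - a) + C * E ^ n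
      ≤ C * (1 / (2 * C) * u n) + 1 / (2 * C) * (E * M) ^ n / 2 := by
        gcongr
        rw [le_div_iff₀ two_pos, div_mul_eq_mul_div, le_div_iff₀ (by positivity)]
        linear_combination hforce
    _ = u n / 2 + 1 / (2 * C) * (E * M) ^ n / 2 := by field_simp
    _ ≤ u n := by linarith

/-- A nonnegative sequence satisfying `v n ≤ C₁ Σ_{a+b=n, a,b ≥ 1} v_a v_b + C₁ e^{s n}`
grows at most exponentially. -/
theorem stmt2 (v : ℕ → ℝ) (s C₁ : ℝ) (hC₁ : 0 < C₁) (hv : ∀ n, 0 ≤ v n)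
    (hrec : ∀ n ≥ 1, v n ≤ C₁ * (∑ a ∈ Finset.Ioo 0 n, v a * v (n - a)) + C₁ * Real.exp (s * n)) :
    ∃ R > 0, ∀ n ≥ 1, v n ≤ R ^ n := by
  have hexp (n : ℕ) : Real.exp (s * n) = Real.exp s ^ n := by rw [mul_comm, Real.exp_nat_mul]
  refine ⟨4 * (Real.exp s * max 1 (4 * C₁ ^ 2)) * max 1 (1 / (2 * C₁)), by positivity,
    fun n hn => ?_⟩
  have hle := le_of_convolution_supersolution hC₁.le hv (by simpa only [hexp] using hrec)
    (fun n hn => catalanMajorant_isSupersolution hC₁ (Real.exp_pos s).le hn) n hn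
  exact hle.trans (catalanMajorant_le_pow (by positivity) hn)
end catalanMajorant
end

section
/- Let Γ be a countable set, d : Γ → [0,∞) with {γ : d(γ) ≤ T} finite for every T, and w : Γ → (0,∞). Let δ be the critical exponent of the series Σ_γ w(γ) e^{-s·d(γ)} (the infimum of the s for which the series converges), and assume δ is finite. Then for every c > 0, δ = limsup_{T → ∞} (1/T) · log( Σ_{γ : T-c ≤ d(γ) ≤ T} w(γ) ), where the sum over an empty index set is 0 and log 0 = -∞. -/
open Filter Real

/-- The finite critical exponent equals the exponential growth rate of annular sums. -/
theorem stmt5 {Γ : Type*} [Countable Γ] (d w : Γ → ℝ) (δ : ℝ)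
    (hd : ∀ γ, 0 ≤ d γ) (hfin : ∀ T : ℝ, {γ | d γ ≤ T}.Finite)
    (hw : ∀ γ, 0 < w γ)
    (hconv : ∀ s : ℝ, δ < s → Summable (fun γ => w γ * Real.exp (-s * d γ)))
    (hdiv : ∀ s : ℝ, s < δ → ¬ Summable (fun γ => w γ * Real.exp (-s * d γ))) :
    ∀ c > (0:ℝ), (δ : EReal) =
      Filter.limsup (fun T : ℝ =>
        if (∑' γ, Set.indicator {γ | T - c ≤ d γ ∧ d γ ≤ T} w γ) = 0 then (⊥ : EReal)
        else ((Real.log (∑' γ, Set.indicator {γ | T - c ≤ d γ ∧ d γ ≤ T} w γ) / T : ℝ) : EReal))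
        Filter.atTop := by
  intro c hc
  -- Γ is nonempty (otherwise every series is summable, contradicting hdiv)
  have hne : Nonempty Γ := by
    by_contra h
    have : IsEmpty Γ := not_nonempty_iff.mp h
    exact hdiv (δ - 1) (by linarith)
      (summable_of_ne_finset_zero (s := (∅ : Finset Γ)) (fun γ _ => this.elim γ))
  -- annuli and their sums
  set A : ℝ → Set Γ := fun T => {γ | T - c ≤ d γ ∧ d γ ≤ T} with hA
  set a : ℝ → ℝ := fun T => ∑' γ, (A T).indicator w γ with ha
  set F : ℝ → EReal := fun T =>
      if a T = 0 then (⊥ : EReal) else ((Real.log (a T) / T : ℝ) : EReal) with hF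
  show (δ : EReal) = Filter.limsup F Filter.atTop
  have hAfin : ∀ T, (A T).Finite := fun T => (hfin T).subset (fun γ hγ => hγ.2)
  have hind_nonneg : ∀ T γ, 0 ≤ (A T).indicator w γ := fun T γ =>
    Set.indicator_nonneg (fun γ _ => (hw γ).le) γ
  have hind_summ : ∀ T, Summable ((A T).indicator w) := by
    intro T
    apply summable_of_ne_finset_zero (s := (hAfin T).toFinset)
    intro γ hγ
    exact Set.indicator_of_notMem (by simpa using hγ) w
  have ha_nonneg : ∀ T, 0 ≤ a T := fun T => tsum_nonneg (hind_nonneg T)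
  -- finite subsums of the annulus are bounded by a T
  have hsum_le : ∀ (T : ℝ) (v : Finset Γ), (∀ γ ∈ v, γ ∈ A T) → ∑ γ ∈ v, w γ ≤ a T := by
    intro T v hv
    have : ∑ γ ∈ v, w γ = ∑ γ ∈ v, (A T).indicator w γ := by
      apply Finset.sum_congr rfl
      intro γ hγ
      exact (Set.indicator_of_mem (hv γ hγ) w).symm
    rw [this]
    exact Summable.sum_le_tsum v (fun γ _ => hind_nonneg T γ) (hind_summ T)
  -- UPPER BOUND: limsup F ≤ s for every s > δ
  have upper : ∀ s : ℝ, δ < s → Filter.limsup F Filter.atTop ≤ (s : EReal) := by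
    intro s hs
    have hS : Summable (fun γ => w γ * Real.exp (-s * d γ)) := hconv s hs
    set S : ℝ := ∑' γ, w γ * Real.exp (-s * d γ) with hSdef
    have hS0 : 0 < S := by
      refine Summable.tsum_pos hS (fun γ => (mul_pos (hw γ) (Real.exp_pos _)).le)
        (Classical.arbitrary Γ) (mul_pos (hw _) (Real.exp_pos _))
    have key : ∀ T : ℝ, a T ≤ Real.exp (|s| * c) * Real.exp (s * T) * S := by
      intro T
      have hptw : ∀ γ, (A T).indicator w γ ≤
          (Real.exp (|s| * c) * Real.exp (s * T)) * (w γ * Real.exp (-s * d γ)) := by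
        intro γ
        by_cases hγ : γ ∈ A T
        · rw [Set.indicator_of_mem hγ w]
          obtain ⟨h1, h2⟩ := hγ
          have hexp : s * d γ ≤ |s| * c + s * T := by
            rcases le_total 0 s with hs0 | hs0
            · rw [abs_of_nonneg hs0]
              nlinarith
            · rw [abs_of_nonpos hs0]
              nlinarith
          have hle : Real.exp (s * d γ) ≤ Real.exp (|s| * c) * Real.exp (s * T) := by
            rw [← Real.exp_add]
            exact Real.exp_le_exp.mpr hexp
          have hone : Real.exp (s * d γ) * Real.exp (-s * d γ) = 1 := by
            rw [← Real.exp_add]; simp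
          calc w γ = w γ * (Real.exp (s * d γ) * Real.exp (-s * d γ)) := by
                rw [hone, mul_one]
            _ ≤ w γ * ((Real.exp (|s| * c) * Real.exp (s * T)) * Real.exp (-s * d γ)) := by
                apply mul_le_mul_of_nonneg_left _ (hw γ).le
                exact mul_le_mul_of_nonneg_right hle (Real.exp_pos _).le
            _ = Real.exp (|s| * c) * Real.exp (s * T) * (w γ * Real.exp (-s * d γ)) := by ring
        · rw [Set.indicator_of_notMem hγ w]
          have := (hw γ).le
          positivity
      calc a T ≤ ∑' γ, (Real.exp (|s| * c) * Real.exp (s * T)) * (w γ * Real.exp (-s * d γ)) :=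
            Summable.tsum_le_tsum hptw (hind_summ T) (hS.mul_left _)
        _ = Real.exp (|s| * c) * Real.exp (s * T) * S := by rw [tsum_mul_left]
    -- pointwise eventual bound
    have hev : ∀ᶠ T in atTop, F T ≤ ((s + (|s| * c + Real.log S) / T : ℝ) : EReal) := by
      filter_upwards [eventually_ge_atTop (1:ℝ)] with T hT
      have hT0 : (0:ℝ) < T := lt_of_lt_of_le one_pos hT
      by_cases h0 : a T = 0
      · simp only [hF, h0, if_pos]
        exact bot_le
      · have haT : 0 < a T := lt_of_le_of_ne (ha_nonneg T) (Ne.symm h0)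
        simp only [hF, h0, if_neg, if_false]
        rw [EReal.coe_le_coe_iff]
        have hlog : Real.log (a T) ≤ |s| * c + s * T + Real.log S := by
          calc Real.log (a T) ≤ Real.log (Real.exp (|s| * c) * Real.exp (s * T) * S) :=
                Real.log_le_log haT (key T)
            _ = |s| * c + s * T + Real.log S := by
                rw [Real.log_mul (by positivity) (ne_of_gt hS0),
                  Real.log_mul (by positivity) (by positivity),
                  Real.log_exp, Real.log_exp]
        rw [div_le_iff₀ hT0]
        have hexpand : (s + (|s| * c + Real.log S) / T) * T = s * T + (|s| * c + Real.log S) := by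
          field_simp
        rw [hexpand]
        linarith
    have htend : Filter.Tendsto (fun T : ℝ => ((s + (|s| * c + Real.log S) / T : ℝ) : EReal))
        atTop (nhds (s : EReal)) := by
      rw [EReal.tendsto_coe]
      have : Filter.Tendsto (fun T : ℝ => s + (|s| * c + Real.log S) / T) atTop
          (nhds (s + 0)) :=
        tendsto_const_nhds.add (tendsto_const_nhds.div_atTop tendsto_id)
      simpa using this
    calc Filter.limsup F atTop
        ≤ Filter.limsup (fun T : ℝ => ((s + (|s| * c + Real.log S) / T : ℝ) : EReal)) atTop :=
          Filter.limsup_le_limsup hev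
      _ = (s : EReal) := htend.limsup_eq
  -- limsup F ≤ δ
  have hupper : Filter.limsup F Filter.atTop ≤ (δ : EReal) := by
    by_contra h
    push_neg at h
    obtain ⟨s, hs1, hs2⟩ := EReal.exists_between_coe_real h
    exact absurd (upper s (EReal.coe_lt_coe_iff.mp hs1)) (not_le.mpr hs2)
  -- LOWER BOUND: δ ≤ limsup F
  have hlower : (δ : EReal) ≤ Filter.limsup F Filter.atTop := by
    by_contra h
    push_neg at h
    obtain ⟨s₁, hls1, hs1δ'⟩ := EReal.exists_between_coe_real h
    have hs1δ : s₁ < δ := EReal.coe_lt_coe_iff.mp hs1δ'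
    obtain ⟨s, hs1s, hsδ⟩ := exists_between hs1δ
    -- eventually F T < s₁, hence a T ≤ exp (s₁ * T) for large T
    have hev : ∀ᶠ T in (atTop : Filter ℝ), F T < (s₁ : EReal) ∧ (1:ℝ) ≤ T :=
      (Filter.eventually_lt_of_limsup_lt hls1).and (eventually_ge_atTop 1)
    obtain ⟨T₀, hT₀⟩ := Filter.eventually_atTop.mp hev
    have hbound : ∀ T ≥ T₀, a T ≤ Real.exp (s₁ * T) := by
      intro T hT
      obtain ⟨hFT, hT1⟩ := hT₀ T hT
      have hT0 : (0:ℝ) < T := lt_of_lt_of_le one_pos hT1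
      by_cases h0 : a T = 0
      · rw [h0]; positivity
      · have haT : 0 < a T := lt_of_le_of_ne (ha_nonneg T) (Ne.symm h0)
        simp only [hF, h0, if_neg, if_false] at hFT
        rw [EReal.coe_lt_coe_iff] at hFT
        have hlog : Real.log (a T) < s₁ * T := by
          rw [div_lt_iff₀ hT0] at hFT
          linarith
        calc a T = Real.exp (Real.log (a T)) := (Real.exp_log haT).symm
          _ ≤ Real.exp (s₁ * T) := Real.exp_le_exp.mpr hlog.le
    -- the binning function
    set nf : Γ → ℕ := fun γ => ⌈d γ / c⌉₊ with hnf
    have hnf1 : ∀ γ, d γ ≤ (nf γ : ℝ) * c := by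
      intro γ
      have := Nat.le_ceil (d γ / c)
      rw [div_le_iff₀ hc] at this
      simpa [hnf] using this
    have hnf2 : ∀ γ, (nf γ : ℝ) * c - c ≤ d γ := by
      intro γ
      have h1 : ((nf γ : ℕ) : ℝ) < d γ / c + 1 :=
        Nat.ceil_lt_add_one (div_nonneg (hd γ) hc.le)
      have h2 : ((nf γ : ℕ) : ℝ) - 1 < d γ / c := by linarith
      rw [lt_div_iff₀ hc] at h2
      nlinarith
    have hmemA : ∀ γ, γ ∈ A ((nf γ : ℝ) * c) := fun γ => ⟨hnf2 γ, hnf1 γ⟩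
    -- the dominating sequence
    set g : ℕ → ℝ := fun n =>
      Real.exp (|s| * c) * (Real.exp (-(s * ((n : ℝ) * c))) * a ((n : ℝ) * c)) with hg
    have hg_nonneg : ∀ n, 0 ≤ g n := by
      intro n
      have := ha_nonneg ((n : ℝ) * c)
      positivity
    -- summability of g
    set r : ℝ := Real.exp ((s₁ - s) * c) with hr
    have hr0 : 0 < r := Real.exp_pos _
    have hr1 : r < 1 := by
      rw [hr, Real.exp_lt_one_iff]
      nlinarith
    set N : ℕ := ⌈T₀ / c⌉₊ with hN
    have hNc : T₀ ≤ (N : ℝ) * c := by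
      have := Nat.le_ceil (T₀ / c)
      rw [div_le_iff₀ hc] at this
      simpa [hN] using this
    have hg_summ : Summable g := by
      rw [← summable_nat_add_iff N]
      apply Summable.of_nonneg_of_le (fun n => hg_nonneg (n + N))
        (g := fun n => g (n + N)) (f := fun n => (Real.exp (|s| * c) * r ^ N) * r ^ n)
      · intro n
        have hTN : T₀ ≤ ((n + N : ℕ) : ℝ) * c := by
          calc T₀ ≤ (N : ℝ) * c := hNc
            _ ≤ ((n + N : ℕ) : ℝ) * c := by
              apply mul_le_mul_of_nonneg_right _ hc.le
              exact_mod_cast Nat.le_add_left N n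
        have hbd := hbound (((n + N : ℕ) : ℝ) * c) hTN
        calc g (n + N)
            ≤ Real.exp (|s| * c) *
              (Real.exp (-(s * (((n + N : ℕ) : ℝ) * c))) * Real.exp (s₁ * (((n + N : ℕ) : ℝ) * c))) := by
              apply mul_le_mul_of_nonneg_left _ (Real.exp_pos _).le
              exact mul_le_mul_of_nonneg_left hbd (Real.exp_pos _).le
          _ = Real.exp (|s| * c) * r ^ (n + N) := by
              rw [← Real.exp_add, hr, ← Real.exp_nat_mul]
              congr 1
              push_cast
              ring
          _ = (Real.exp (|s| * c) * r ^ N) * r ^ n := by rw [pow_add]; ring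
      · exact ((summable_geometric_of_lt_one hr0.le hr1).mul_left _)
    -- summability of the original series at s via finite subsums
    have hsummable : Summable (fun γ => w γ * Real.exp (-s * d γ)) := by
      apply summable_of_sum_le (c := ∑' n, g n)
      · intro γ
        exact mul_nonneg (hw γ).le (Real.exp_pos _).le
      · intro u
        classical
        have hmaps : ∀ γ ∈ u, nf γ ∈ u.image nf := fun γ hγ => Finset.mem_image_of_mem nf hγ
        rw [← Finset.sum_fiberwise_of_maps_to hmaps (fun γ => w γ * Real.exp (-s * d γ))]
        have hinner : ∀ n ∈ u.image nf,
            ∑ γ ∈ u.filter (fun γ => nf γ = n), w γ * Real.exp (-s * d γ) ≤ g n := by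
          intro n _
          have hterm : ∀ γ ∈ u.filter (fun γ => nf γ = n),
              w γ * Real.exp (-s * d γ) ≤
                (Real.exp (|s| * c) * Real.exp (-(s * ((n : ℝ) * c)))) * w γ := by
            intro γ hγ
            have hnfγ : nf γ = n := (Finset.mem_filter.mp hγ).2
            have h1 : (n : ℝ) * c - c ≤ d γ := by rw [← hnfγ]; exact hnf2 γ
            have h2 : d γ ≤ (n : ℝ) * c := by rw [← hnfγ]; exact hnf1 γ
            have hexp : -s * d γ ≤ |s| * c + (-(s * ((n : ℝ) * c))) := by
              rcases le_total 0 s with hs0 | hs0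
              · rw [abs_of_nonneg hs0]; nlinarith
              · rw [abs_of_nonpos hs0]; nlinarith
            have hle : Real.exp (-s * d γ) ≤
                Real.exp (|s| * c) * Real.exp (-(s * ((n : ℝ) * c))) := by
              rw [← Real.exp_add]
              exact Real.exp_le_exp.mpr hexp
            calc w γ * Real.exp (-s * d γ)
                ≤ w γ * (Real.exp (|s| * c) * Real.exp (-(s * ((n : ℝ) * c)))) :=
                  mul_le_mul_of_nonneg_left hle (hw γ).le
              _ = (Real.exp (|s| * c) * Real.exp (-(s * ((n : ℝ) * c)))) * w γ := by ring
          calc ∑ γ ∈ u.filter (fun γ => nf γ = n), w γ * Real.exp (-s * d γ)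
              ≤ ∑ γ ∈ u.filter (fun γ => nf γ = n),
                  (Real.exp (|s| * c) * Real.exp (-(s * ((n : ℝ) * c)))) * w γ :=
                Finset.sum_le_sum hterm
            _ = (Real.exp (|s| * c) * Real.exp (-(s * ((n : ℝ) * c)))) *
                  ∑ γ ∈ u.filter (fun γ => nf γ = n), w γ := by rw [Finset.mul_sum]
            _ ≤ (Real.exp (|s| * c) * Real.exp (-(s * ((n : ℝ) * c)))) * a ((n : ℝ) * c) := by
                apply mul_le_mul_of_nonneg_left _ (by positivity)
                apply hsum_le
                intro γ hγ
                have hnfγ : nf γ = n := (Finset.mem_filter.mp hγ).2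
                rw [← hnfγ]
                exact hmemA γ
            _ = g n := by rw [hg]; ring
        calc ∑ n ∈ u.image nf, ∑ γ ∈ u.filter (fun γ => nf γ = n), w γ * Real.exp (-s * d γ)
            ≤ ∑ n ∈ u.image nf, g n := Finset.sum_le_sum hinner
          _ ≤ ∑' n, g n := Summable.sum_le_tsum _ (fun n _ => hg_nonneg n) hg_summ
    exact hdiv s hsδ hsummable
  exact le_antisymm hlower hupper
end

section
/- Let (a_n)_{n ≥ 0} be non-negative reals and δ ∈ ℝ such that the series Σ_n a_n e^{-s n} converges for s > δ and diverges for s < δ, and assume Σ_n a_n e^{-δ n} < ∞. Then there exists a non-decreasing function h : [0,∞) → (0,∞) with the following two properties: (1) for every η > 0 there exist C_η > 0 and r_η > 0 such that h(t+r) ≤ C_η e^{η t} h(r) for all r ≥ r_η and t ≥ 0; (2) the modified series Σ_n h(n) a_n e^{-δ n} diverges (and consequently Σ_n h(n) a_n e^{-s n} still converges for all s > δ). -/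
/-!
Write `b n = a n e^{-δ n}`. Since `∑ b n e^{c n}` diverges for every `c > 0`, one can cut `ℕ` into
consecutive blocks `[N k, N (k+1))` on each of which `∑ b n e^{(n - N k)/(k+1)} ≥ 1`. Let the slope
`ε i` be `1/(k+1)` on the `k`-th block and `h t = exp (∑_{i < ⌊t⌋} ε i)`. Then `h n b n` has sum at
least `1` over every block, so `∑ h n b n` diverges, while `ε` decreases to `0`, so `log h` grows
more slowly than any linear function.
-/

open Real Filter Topology Finset

namespace Patterson

section Slope

variable {ε : ℕ → ℝ}

lemma sum_range_le_add_mul_sub (hε : Antitone ε) {n m : ℕ} (hnm : n ≤ m) :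
    ∑ i ∈ range m, ε i ≤ ∑ i ∈ range n, ε i + (m - n : ℝ) * ε n := by
  rw [← sum_range_add_sum_Ico _ hnm]
  gcongr
  calc ∑ i ∈ Ico n m, ε i ≤ #(Ico n m) • ε n :=
        sum_le_card_nsmul _ _ _ fun i hi => hε (mem_Ico.1 hi).1
    _ = (m - n : ℝ) * ε n := by rw [Nat.card_Ico, nsmul_eq_mul, Nat.cast_sub hnm]

lemma mul_sub_le_sum_range {c : ℝ} (hε : ∀ i, 0 ≤ ε i) {n m : ℕ} (hnm : n ≤ m)
    (hc : ∀ i ∈ Ico n m, c ≤ ε i) :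
    (m - n : ℝ) * c ≤ ∑ i ∈ range m, ε i := by
  rw [← sum_range_add_sum_Ico _ hnm]
  calc (m - n : ℝ) * c = #(Ico n m) • c := by rw [Nat.card_Ico, nsmul_eq_mul, Nat.cast_sub hnm]
    _ ≤ ∑ i ∈ Ico n m, ε i := card_nsmul_le_sum _ _ _ hc
    _ ≤ _ := le_add_of_nonneg_left (sum_nonneg fun i _ => hε i)

lemma monotone_sum_range (hε : ∀ i, 0 ≤ ε i) : Monotone fun n => ∑ i ∈ range n, ε i :=
  (sum_mono_set_of_nonneg hε).comp range_mono

variable (hanti : Antitone ε) (hlim : Tendsto ε atTop (𝓝 0))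
include hanti hlim

lemma exists_sum_range_le_add_mul_of_le {η : ℝ} (hη : 0 < η) :
    ∃ n₀ : ℕ, ∀ n m : ℕ, n₀ ≤ n → n ≤ m →
      ∑ i ∈ range m, ε i ≤ ∑ i ∈ range n, ε i + η * (m - n) := by
  obtain ⟨n₀, hn₀⟩ := (hlim.eventually (ge_mem_nhds hη)).exists
  refine ⟨n₀, fun n m hn hnm => (sum_range_le_add_mul_sub hanti hnm).trans ?_⟩
  have : (0 : ℝ) ≤ m - n := sub_nonneg.2 (Nat.cast_le.2 hnm)
  nlinarith [hanti hn]

lemma exists_sum_range_le_add_mul {η : ℝ} (hη : 0 < η) :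
    ∃ C, ∀ n : ℕ, ∑ i ∈ range n, ε i ≤ C + η * n := by
  obtain ⟨n₀, hn₀⟩ := exists_sum_range_le_add_mul_of_le hanti hlim hη
  refine ⟨∑ i ∈ range n₀, ε i, fun n => ?_⟩
  rcases le_total n n₀ with hn | hn
  · have : 0 ≤ η * n := by positivity
    linarith [monotone_sum_range (hanti.le_of_tendsto hlim) hn]
  · have : 0 ≤ η * n₀ := by positivity
    linarith [hn₀ n₀ n le_rfl hn]

end Slope

noncomputable def factor (ε : ℕ → ℝ) (t : ℝ) : ℝ := exp (∑ i ∈ range ⌊t⌋₊, ε i)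

lemma factor_pos (ε : ℕ → ℝ) (t : ℝ) : 0 < factor ε t := exp_pos _

@[simp] lemma factor_natCast (ε : ℕ → ℝ) (n : ℕ) : factor ε n = exp (∑ i ∈ range n, ε i) := by
  rw [factor, Nat.floor_natCast]

lemma monotone_factor {ε : ℕ → ℝ} (hε : ∀ i, 0 ≤ ε i) : Monotone (factor ε) :=
  fun _ _ hst => exp_le_exp.2 (monotone_sum_range hε (Nat.floor_mono hst))

lemma exists_factor_add_le {ε : ℕ → ℝ} (hanti : Antitone ε) (hlim : Tendsto ε atTop (𝓝 0))
    {η : ℝ} (hη : 0 < η) :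
    ∃ C > 0, ∃ r₀ > 0, ∀ r ≥ r₀, ∀ t ≥ (0 : ℝ),
      factor ε (t + r) ≤ C * exp (η * t) * factor ε r := by
  -- the floors lose at most one unit of length, whence the constant `exp η`
  obtain ⟨n₀, hn₀⟩ := exists_sum_range_le_add_mul_of_le hanti hlim hη
  refine ⟨exp η, exp_pos η, n₀ + 1, by positivity, fun r hr t ht => ?_⟩
  have hr₀ : 0 ≤ r := le_trans (by positivity) hr
  have hfloor : (⌊t + r⌋₊ - ⌊r⌋₊ : ℝ) ≤ t + 1 := by
    linarith [Nat.floor_le (add_nonneg ht hr₀), Nat.lt_floor_add_one r]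
  have := hn₀ ⌊r⌋₊ ⌊t + r⌋₊ (Nat.le_floor (by linarith)) (Nat.floor_mono (by linarith))
  rw [factor, factor, ← exp_add, ← exp_add]
  exact exp_le_exp.2 (by linarith [mul_le_mul_of_nonneg_left hfloor hη.le])

lemma summable_factor_mul {ε : ℕ → ℝ} (hanti : Antitone ε) (hlim : Tendsto ε atTop (𝓝 0))
    {a : ℕ → ℝ} (ha : ∀ n, 0 ≤ a n) {σ s : ℝ} (hσs : σ < s)
    (hσ : Summable fun n : ℕ => a n * exp (-σ * n)) :
    Summable fun n : ℕ => factor ε n * (a n * exp (-s * n)) := by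
  obtain ⟨C, hC⟩ := exists_sum_range_le_add_mul hanti hlim (sub_pos.2 hσs)
  refine (hσ.mul_left (exp C)).of_nonneg_of_le
    (fun n => mul_nonneg (factor_pos ε n).le (mul_nonneg (ha n) (exp_pos _).le)) fun n => ?_
  calc factor ε n * (a n * exp (-s * n)) = a n * exp (∑ i ∈ range n, ε i + -s * n) := by
        rw [factor_natCast, exp_add]; ring
    _ ≤ a n * exp (C + -σ * n) :=
        mul_le_mul_of_nonneg_left (exp_le_exp.2 (by linarith [hC n])) (ha n)
    _ = exp C * (a n * exp (-σ * n)) := by rw [exp_add]; ring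

lemma exists_lt_le_sum_Ico {f : ℕ → ℝ} (hf : ∀ n, 0 ≤ f n) (hs : ¬ Summable f) (m : ℕ) (A : ℝ) :
    ∃ M, m < M ∧ A ≤ ∑ n ∈ Ico m M, f n := by
  have := ((not_summable_iff_tendsto_nat_atTop_of_nonneg hf).1 hs).eventually_ge_atTop
    (∑ n ∈ range m, f n + A)
  obtain ⟨M, hM, hmM⟩ := (this.and (eventually_gt_atTop m)).exists
  refine ⟨M, hmM, ?_⟩
  rw [← sum_range_add_sum_Ico _ hmM.le] at hM
  linarith

lemma not_summable_of_one_le_sum_Ico {f : ℕ → ℝ} (hf : ∀ n, 0 ≤ f n) {N : ℕ → ℕ}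
    (hN : Monotone N) (h : ∀ k, 1 ≤ ∑ n ∈ Ico (N k) (N (k + 1)), f n) : ¬ Summable f := by
  have hk : ∀ k : ℕ, (k : ℝ) ≤ ∑ n ∈ Ico (N 0) (N k), f n := by
    intro k
    induction k with
    | zero => simp
    | succ k ih =>
      rw [← sum_Ico_consecutive _ (hN k.zero_le) (hN k.le_succ)]
      push_cast
      linarith [h k]
  intro hs
  obtain ⟨k, hk'⟩ := exists_nat_gt (∑' n, f n)
  linarith [hk k, hs.sum_le_tsum (Ico (N 0) (N k)) fun n _ => hf n]

lemma exists_strictMono_one_le_sum_Ico {b : ℕ → ℝ} (hb : ∀ n, 0 ≤ b n)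
    (hdiv : ∀ c > 0, ¬ Summable fun n : ℕ => b n * exp (c * n)) :
    ∃ N : ℕ → ℕ, StrictMono N ∧ N 0 = 0 ∧
      ∀ k : ℕ, 1 ≤ ∑ n ∈ Ico (N k) (N (k + 1)), b n * exp (((k : ℝ) + 1)⁻¹ * (n - N k)) := by
  have step (k m : ℕ) :
      ∃ M, m < M ∧ 1 ≤ ∑ n ∈ Ico m M, b n * exp (((k : ℝ) + 1)⁻¹ * (n - m)) := by
    refine exists_lt_le_sum_Ico (fun n => mul_nonneg (hb n) (exp_pos _).le) ?_ m 1
    have : (fun n : ℕ => b n * exp (((k : ℝ) + 1)⁻¹ * (n - m))) =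
        fun n => exp (-(((k : ℝ) + 1)⁻¹ * m)) * (b n * exp (((k : ℝ) + 1)⁻¹ * n)) := by
      ext n
      rw [mul_left_comm, ← exp_add]
      ring_nf
    rw [this, summable_mul_left_iff (exp_pos _).ne']
    exact hdiv _ (by positivity)
  choose F hlt hge using step
  let N : ℕ → ℕ := fun k => Nat.rec 0 F k
  exact ⟨N, strictMono_nat_of_lt_succ fun k => hlt k (N k), rfl, fun k => hge k (N k)⟩

/-- For `N` strictly monotone with `N 0 = 0`, the `k` with `N k ≤ i < N (k + 1)`. -/
def blockIndex (N : ℕ → ℕ) (i : ℕ) : ℕ := Nat.findGreatest (fun k => N k ≤ i) i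

section BlockIndex

variable {N : ℕ → ℕ}

lemma blockIndex_mono (N : ℕ → ℕ) : Monotone (blockIndex N) := fun _ _ hij =>
  Nat.findGreatest_mono (fun _ hk => hk.trans hij) hij

lemma le_blockIndex (hN : StrictMono N) {k i : ℕ} (h : N k ≤ i) : k ≤ blockIndex N i :=
  Nat.le_findGreatest ((hN.id_le k).trans h) h

lemma blockIndex_le (hN : StrictMono N) (h0 : N 0 = 0) {k i : ℕ} (h : i < N (k + 1)) :
    blockIndex N i ≤ k := by
  have : N (blockIndex N i) ≤ i :=
    Nat.findGreatest_spec (P := fun k => N k ≤ i) i.zero_le (by simp [h0])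
  exact Nat.lt_succ_iff.1 (hN.lt_iff_lt.1 (this.trans_lt h))

lemma tendsto_blockIndex (hN : StrictMono N) : Tendsto (blockIndex N) atTop atTop :=
  tendsto_atTop_atTop.2 fun k => ⟨N k, fun _ => le_blockIndex hN⟩

end BlockIndex

theorem exists_antitone_tendsto_zero_not_summable {b : ℕ → ℝ} (hb : ∀ n, 0 ≤ b n)
    (hdiv : ∀ c > 0, ¬ Summable fun n : ℕ => b n * exp (c * n)) :
    ∃ ε : ℕ → ℝ, Antitone ε ∧ Tendsto ε atTop (𝓝 0) ∧
      ¬ Summable fun n => exp (∑ i ∈ range n, ε i) * b n := by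
  obtain ⟨N, hN, hN0, hblock⟩ := exists_strictMono_one_le_sum_Ico hb hdiv
  let ε : ℕ → ℝ := fun i => ((blockIndex N i : ℝ) + 1)⁻¹
  have hanti : Antitone ε := fun i j hij => by
    simp only [ε]
    gcongr
    exact blockIndex_mono N hij
  have hlim : Tendsto ε atTop (𝓝 0) :=
    tendsto_inv_atTop_zero.comp <| tendsto_atTop_add_const_right _ 1 <|
      tendsto_natCast_atTop_atTop.comp (tendsto_blockIndex hN)
  refine ⟨ε, hanti, hlim, not_summable_of_one_le_sum_Ico
    (fun n => mul_nonneg (exp_pos _).le (hb n)) hN.monotone fun k =>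
      (hblock k).trans (sum_le_sum fun n hn => ?_)⟩
  obtain ⟨hkn, hnk⟩ := mem_Ico.1 hn
  have : ((k : ℝ) + 1)⁻¹ * (n - N k) ≤ ∑ i ∈ range n, ε i := by
    rw [mul_comm]
    refine mul_sub_le_sum_range (hanti.le_of_tendsto hlim) hkn fun i hi => ?_
    simp only [ε]
    gcongr
    exact blockIndex_le hN hN0 ((mem_Ico.1 hi).2.trans hnk)
  rw [mul_comm]
  exact mul_le_mul_of_nonneg_right (exp_le_exp.2 this) (hb n)

end Patterson

theorem stmt8_general (a : ℕ → ℝ) (δ : ℝ) (ha : ∀ n, 0 ≤ a n)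
    (hconv : ∀ s > δ, Summable (fun n : ℕ => a n * Real.exp (-s * (n : ℝ))))
    (hdiv : ∀ s < δ, ¬ Summable (fun n : ℕ => a n * Real.exp (-s * (n : ℝ)))) :
    ∃ h : ℝ → ℝ, (∀ t ≥ (0:ℝ), 0 < h t) ∧ MonotoneOn h (Set.Ici 0) ∧
      (∀ η > (0:ℝ), ∃ Cη > (0:ℝ), ∃ rη > (0:ℝ), ∀ r ≥ rη, ∀ t ≥ (0:ℝ),
        h (t + r) ≤ Cη * Real.exp (η * t) * h r) ∧
      ¬ Summable (fun n : ℕ => h (n : ℝ) * (a n * Real.exp (-δ * (n : ℝ)))) ∧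
      (∀ s > δ, Summable (fun n : ℕ => h (n : ℝ) * (a n * Real.exp (-s * (n : ℝ))))) := by
  have hb (n : ℕ) : 0 ≤ a n * exp (-δ * n) := mul_nonneg (ha n) (exp_pos _).le
  have hbdiv : ∀ c > 0, ¬ Summable fun n : ℕ => a n * exp (-δ * n) * exp (c * n) := by
    intro c hc
    convert hdiv (δ - c) (by linarith) using 3 with n
    rw [mul_assoc, ← exp_add]
    ring_nf
  obtain ⟨ε, hanti, hlim, hns⟩ := Patterson.exists_antitone_tendsto_zero_not_summable hb hbdiv
  refine ⟨Patterson.factor ε, fun t _ => Patterson.factor_pos ε t,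
    (Patterson.monotone_factor (hanti.le_of_tendsto hlim)).monotoneOn _,
    fun η hη => Patterson.exists_factor_add_le hanti hlim hη, ?_, fun s hs => ?_⟩
  · simpa only [Patterson.factor_natCast] using hns
  · exact Patterson.summable_factor_mul hanti hlim ha (by linarith : (δ + s) / 2 < s)
      (hconv _ (by linarith))

/-- Patterson's trick: a slowly growing nondecreasing correction factor making the critical
series divergent without changing the abscissa of convergence. -/
theorem stmt8 (a : ℕ → ℝ) (δ : ℝ) (ha : ∀ n, 0 ≤ a n)
    (hconv : ∀ s > δ, Summable (fun n : ℕ => a n * Real.exp (-s * (n : ℝ))))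
    (hdiv : ∀ s < δ, ¬ Summable (fun n : ℕ => a n * Real.exp (-s * (n : ℝ))))
    (hcrit : Summable (fun n : ℕ => a n * Real.exp (-δ * (n : ℝ)))) :
    ∃ h : ℝ → ℝ, (∀ t ≥ (0:ℝ), 0 < h t) ∧ MonotoneOn h (Set.Ici 0) ∧
      (∀ η > (0:ℝ), ∃ Cη > (0:ℝ), ∃ rη > (0:ℝ), ∀ r ≥ rη, ∀ t ≥ (0:ℝ),
        h (t + r) ≤ Cη * Real.exp (η * t) * h r) ∧
      ¬ Summable (fun n : ℕ => h (n : ℝ) * (a n * Real.exp (-δ * (n : ℝ)))) ∧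
      (∀ s > δ, Summable (fun n : ℕ => h (n : ℝ) * (a n * Real.exp (-s * (n : ℝ))))) :=
  stmt8_general a δ ha hconv hdiv
end

section
/- Let X be a σ-compact locally compact metric space and let Φ be a function from the set of Borel probability measures on X to ℝ ∪ {−∞}. Define A = sup{ limsup_n Φ(μ_n) : (μ_n) a sequence of probability measures converging vaguely to 0 } and B = lim_{ε → 0} inf_{K compact} sup{ Φ(μ) : μ(K) ≤ ε }. Then A = B, and moreover B equals inf_{K compact} lim_{ε → 0} sup{ Φ(μ) : μ(K) ≤ ε }. -/
/-!
Vague convergence to `0` of measures finite on compacts is the same as `μₙ(K) → 0` for every compact `K`: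
an Urysohn function dominating `𝟙_K` gives one direction, the bound
`|∫ φ dμₙ| ≤ ‖φ‖_∞ μₙ(supp φ)` the other. Along such a sequence `Φ(μₙ)` is eventually bounded by
`sup {Φ μ : μ(K) ≤ ε}` for any `K` and `ε`, so `A ≤ B`. Conversely, if `c < B`, then for a compact
exhaustion `(Kₙ)` there are `μₙ` with `μₙ(Kₙ) ≤ 1/(n+1)` and `Φ(μₙ) > c`; every compact set lies in
some `Kₙ`, so `μₙ → 0` vaguely and `A ≥ c`. The last equality only swaps two infima.
-/

open MeasureTheory Filter Topology

section VagueNull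

variable {X ι : Type*} [TopologicalSpace X] [MeasurableSpace X]
  {l : Filter ι} {μ : ι → Measure X}

theorem tendsto_measure_zero_of_tendsto_integral_zero [OpensMeasurableSpace X] [T2Space X]
    [LocallyCompactSpace X]
    [∀ i, IsFiniteMeasureOnCompacts (μ i)]
    (hμ : ∀ φ : X → ℝ, Continuous φ → HasCompactSupport φ →
      Tendsto (fun i => ∫ y, φ y ∂μ i) l (𝓝 0))
    {K : Set X} (hK : IsCompact K) : Tendsto (fun i => μ i K) l (𝓝 0) := by
  obtain ⟨f, hf_one, -, hf_supp, hf_mem⟩ :=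
    exists_continuous_one_zero_of_isCompact hK isClosed_empty (Set.disjoint_empty K)
  have hK_le : ∀ i, (μ i).real K ≤ ∫ y, f y ∂μ i := fun i => by
    have hf_int : Integrable f (μ i) := f.continuous.integrable_of_hasCompactSupport hf_supp
    calc (μ i).real K
        = 1 * (μ i).real K := (one_mul _).symm
      _ ≤ ∫ y in K, f y ∂μ i :=
          setIntegral_ge_of_const_le_real hK.measurableSet hK.measure_lt_top.ne
            (fun y hy => (hf_one hy).ge) hf_int.integrableOn
      _ ≤ ∫ y, f y ∂μ i := setIntegral_le_integral hf_int (.of_forall fun y => (hf_mem y).1)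
  refine (ENNReal.tendsto_toReal_zero_iff fun i => hK.measure_lt_top.ne).1 ?_
  exact squeeze_zero (fun i => ENNReal.toReal_nonneg) hK_le (hμ f f.continuous hf_supp)

theorem tendsto_integral_zero_of_tendsto_measure_zero
    (hμ : ∀ K : Set X, IsCompact K → Tendsto (fun i => μ i K) l (𝓝 0))
    {φ : X → ℝ} (hφ : Continuous φ) (hφ_supp : HasCompactSupport φ) :
    Tendsto (fun i => ∫ y, φ y ∂μ i) l (𝓝 0) := by
  obtain ⟨C, hC⟩ := hφ_supp.exists_bound_of_continuous hφ
  have h_supp := hμ _ hφ_supp.isCompact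
  have h_fin : ∀ᶠ i in l, μ i (tsupport φ) < ⊤ :=
    h_supp.eventually (gt_mem_nhds ENNReal.zero_lt_top)
  have h_bound : ∀ᶠ i in l, ‖∫ y, φ y ∂μ i‖ ≤ C * (μ i).real (tsupport φ) := by
    filter_upwards [h_fin] with i hi
    rw [← setIntegral_eq_integral_of_forall_compl_eq_zero
      (fun y hy => image_eq_zero_of_notMem_tsupport hy)]
    exact norm_setIntegral_le_of_norm_le_const hi fun y _ => hC y
  have h_real : Tendsto (fun i => (μ i).real (tsupport φ)) l (𝓝 0) :=
    (ENNReal.tendsto_toReal ENNReal.zero_ne_top).comp h_supp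
  simpa using squeeze_zero_norm' h_bound (by simpa using h_real.const_mul C)

end VagueNull

section ValueAtInfinity

variable {X : Type*} [TopologicalSpace X] [MeasurableSpace X]

/-- `⊥` when no probability measure gives `K` mass at most `ε`. -/
noncomputable def supMassLE (Φ : ProbabilityMeasure X → EReal) (K : Set X) (ε : ℝ) : EReal :=
  ⨆ (μ : ProbabilityMeasure X) (_ : (μ : Measure X) K ≤ ENNReal.ofReal ε), Φ μ

theorem limsup_le_iInf_supMassLE {ι : Type*} {l : Filter ι} (Φ : ProbabilityMeasure X → EReal)
    {μ : ι → ProbabilityMeasure X}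
    (hμ : ∀ K : Set X, IsCompact K → Tendsto (fun i => (μ i : Measure X) K) l (𝓝 0)) :
    limsup (fun i => Φ (μ i)) l ≤
      ⨅ (ε : ℝ) (_ : 0 < ε), ⨅ (K : Set X) (_ : IsCompact K), supMassLE Φ K ε := by
  refine le_iInf₂ fun ε hε => le_iInf₂ fun K hK => limsup_le_of_le (by isBoundedDefault) ?_
  filter_upwards [(hμ K hK).eventually (ge_mem_nhds (ENNReal.ofReal_pos.2 hε))] with i hi
  exact le_iSup₂_of_le (μ i) hi le_rfl

theorem exists_seq_tendsto_measure_zero_lt [WeaklyLocallyCompactSpace X] [SigmaCompactSpace X]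
    (Φ : ProbabilityMeasure X → EReal) {c : EReal}
    (hc : c < ⨅ (ε : ℝ) (_ : 0 < ε), ⨅ (K : Set X) (_ : IsCompact K), supMassLE Φ K ε) :
    ∃ μ : ℕ → ProbabilityMeasure X,
      (∀ K : Set X, IsCompact K → Tendsto (fun n => (μ n : Measure X) K) atTop (𝓝 0)) ∧
      ∀ n, c < Φ (μ n) := by
  let E := CompactExhaustion.choice X
  have h_exists : ∀ n : ℕ, ∃ ν : ProbabilityMeasure X,
      (ν : Measure X) (E n) ≤ ENNReal.ofReal (1 / (n + 1)) ∧ c < Φ ν := fun n => by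
    have hε : (0 : ℝ) < 1 / ((n : ℝ) + 1) := by positivity
    have h := hc.trans_le ((iInf₂_le _ hε).trans (iInf₂_le _ (E.isCompact n)))
    simpa only [supMassLE, lt_iSup_iff, exists_prop, and_comm] using h
  choose μ hμ_small hμ_large using h_exists
  refine ⟨μ, fun K hK => ?_, hμ_large⟩
  obtain ⟨m, hm⟩ := E.exists_superset_of_isCompact hK
  have h_lim : Tendsto (fun n : ℕ => ENNReal.ofReal (1 / (n + 1))) atTop (𝓝 0) := by
    simpa using (ENNReal.tendsto_ofReal tendsto_one_div_add_atTop_nhds_zero_nat)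
  refine tendsto_of_tendsto_of_tendsto_of_le_of_le' tendsto_const_nhds h_lim
    (.of_forall fun n => bot_le) ?_
  filter_upwards [eventually_ge_atTop m] with n hn
  exact (measure_mono (hm.trans (E.subset hn))).trans (hμ_small n)

end ValueAtInfinity

/-- The three natural definitions of the "value at infinity" of a functional `Φ` on
probability measures coincide: the sup of limsups along sequences converging vaguely to `0`,
`lim_{ε→0} inf_K sup {Φ(μ) : μ(K) ≤ ε}`, and `inf_K lim_{ε→0} sup {Φ(μ) : μ(K) ≤ ε}`. -/
theorem stmt13 {X : Type*} [MetricSpace X] [SigmaCompactSpace X] [LocallyCompactSpace X]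
    [MeasurableSpace X] [BorelSpace X]
    (Φ : ProbabilityMeasure X → EReal) :
    (sSup {x : EReal | ∃ μ : ℕ → ProbabilityMeasure X,
        (∀ φ : X → ℝ, Continuous φ → HasCompactSupport φ →
          Tendsto (fun n => ∫ y, φ y ∂(μ n : Measure X)) atTop (nhds 0)) ∧
        x = limsup (fun n => Φ (μ n)) atTop}
      = ⨅ (ε : ℝ) (_ : 0 < ε), ⨅ (K : Set X) (_ : IsCompact K),
          ⨆ (μ : ProbabilityMeasure X) (_ : (μ : Measure X) K ≤ ENNReal.ofReal ε), Φ μ) ∧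
    ((⨅ (ε : ℝ) (_ : 0 < ε), ⨅ (K : Set X) (_ : IsCompact K),
          ⨆ (μ : ProbabilityMeasure X) (_ : (μ : Measure X) K ≤ ENNReal.ofReal ε), Φ μ)
      = ⨅ (K : Set X) (_ : IsCompact K), ⨅ (ε : ℝ) (_ : 0 < ε),
          ⨆ (μ : ProbabilityMeasure X) (_ : (μ : Measure X) K ≤ ENNReal.ofReal ε), Φ μ) := by
  refine ⟨le_antisymm (sSup_le ?_) (le_of_forall_lt_imp_le_of_dense fun c hc => ?_), iInf₂_comm _⟩
  · rintro _ ⟨μ, hμ, rfl⟩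
    exact limsup_le_iInf_supMassLE Φ fun K hK =>
      tendsto_measure_zero_of_tendsto_integral_zero hμ hK
  · obtain ⟨μ, hμ, hcμ⟩ := exists_seq_tendsto_measure_zero_lt Φ hc
    have h_vague : ∀ φ : X → ℝ, Continuous φ → HasCompactSupport φ →
        Tendsto (fun n => ∫ y, φ y ∂(μ n : Measure X)) atTop (𝓝 0) :=
      fun φ hφ hφ_supp => tendsto_integral_zero_of_tendsto_measure_zero hμ hφ hφ_supp
    have h_limsup : c ≤ limsup (fun n => Φ (μ n)) atTop :=
      le_limsup_of_frequently_le (.of_forall fun n => (hcμ n).le) (by isBoundedDefault)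
    exact h_limsup.trans (le_sSup ⟨μ, h_vague, rfl⟩)
end
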